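/- No tree T satisfies γ_g(T) = 4 and γ_g'(T) = 3. -/

import Mathlib

open Finset

namespace DomGame

variable {V : Type*} [Fintype V] [DecidableEq V]

/-- Closed neighborhood of `v` in `G`, as a `Finset`. -/
noncomputable def cn (G : SimpleGraph V) (v : V) : Finset V :=
  haveI : DecidablePred (fun u : V => u = v ∨ G.Adj v u) := fun _ => Classical.propDecidable _
  Finset.univ.filter (fun u : V => u = v ∨ G.Adj v u)

/-- Value (number of remaining moves, optimal play) of the domination game on `G`,
with fuel, where `D` is the set of already dominated vertices and `who = true`
means Dominator is to move (minimizing); `who = false` means Staller (maximizing). -/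
noncomputable def auxVal (G : SimpleGraph V) : ℕ → Bool → Finset V → ℕ
  | 0, _, _ => 0
  | n + 1, who, D =>
    if D = Finset.univ then 0
    else
      haveI : DecidablePred (fun v : V => ¬ cn G v ⊆ D) := fun _ => Classical.propDecidable _
      let moves : Finset V := Finset.univ.filter (fun v : V => ¬ cn G v ⊆ D)
      if who then
        WithTop.untopD 0 ((moves.image (fun v => 1 + auxVal G n false (D ∪ cn G v))).min)
      else
        moves.sup (fun v => 1 + auxVal G n true (D ∪ cn G v))

/-- Remaining moves of the domination game on the partially dominated graph `(G, D)`,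
Dominator to move, both players optimal. -/
noncomputable def gVal (G : SimpleGraph V) (D : Finset V) : ℕ :=
  auxVal G (Fintype.card V) true D

/-- Remaining moves, Staller to move. -/
noncomputable def gVal' (G : SimpleGraph V) (D : Finset V) : ℕ :=
  auxVal G (Fintype.card V) false D

/-- The game domination number (Dominator starts). -/
noncomputable def gammaG (G : SimpleGraph V) : ℕ := gVal G ∅

/-- The Staller-start game domination number. -/
noncomputable def gammaG' (G : SimpleGraph V) : ℕ := gVal' G ∅

/-- `S` is a dominating set of `G`. -/
def IsDomSet (G : SimpleGraph V) (S : Finset V) : Prop :=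
  ∀ v : V, ∃ u ∈ S, u = v ∨ G.Adj u v

/-- The domination number of `G`. -/
noncomputable def gamma (G : SimpleGraph V) : ℕ :=
  sInf {n | ∃ S : Finset V, IsDomSet G S ∧ S.card = n}

end DomGame

/-!
`4 ≤ γ_g` says that every opening `d` has a reply `s` after which no single move finishes the game;
`γ_g' ≤ 3` says that every opening `s` has a reply `d` (a partner of `s`) after which every legal
move finishes it. In a connected triangle-free graph the latter forces `N[s] ∪ N[d]`, written
`cn G s ∪ cn G d`, to miss exactly one vertex: a vertex of `N[s] ∪ N[d]` next to a missed vertex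
would be adjacent to two adjacent missed vertices.

Apply this to a leaf `ℓ` with support `p`: its partner `h` has `N[ℓ] ∪ N[h] = V ∖ {u}`. Staller's
answer to the opening `h` must be a common neighbour `b` of `h` and `p`, and `u` hangs off a
neighbour `a` of `h`, so `u – a – h – b – p – ℓ` is a path. A vertex `c` outside `N[a] ∪ N[p]` is a
neighbour of `h`, and no `e` makes `N[c] ∪ N[e]` miss fewer than two of `u, ℓ, a, b`.
-/

namespace SimpleGraph

variable {V : Type*} {G : SimpleGraph V}

lemma CliqueFree.not_adj_of_adj_of_adj (hG : G.CliqueFree 3) {h a b : V} (ha : G.Adj h a)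
    (hb : G.Adj h b) : ¬ G.Adj a b :=
  fun hab => isIndepSet_neighborSet_of_triangleFree G hG h ha hb hab.ne hab

lemma IsAcyclic.eq_of_adj_of_adj (hG : G.IsAcyclic) {x y a b : V} (hxy : x ≠ y)
    (hxa : G.Adj x a) (hay : G.Adj a y) (hxb : G.Adj x b) (hby : G.Adj b y) : a = b := by
  have hpath := (hG.subsingleton_path x y).elim
    ⟨.cons hxa (.cons hay .nil), by simp [Walk.cons_isPath_iff, hxa.ne, hay.ne, hxy]⟩
    ⟨.cons hxb (.cons hby .nil), by simp [Walk.cons_isPath_iff, hxb.ne, hby.ne, hxy]⟩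
  simpa using congrArg (fun q : G.Path x y => q.1.support) hpath

end SimpleGraph

namespace DomGame

variable {V : Type*} [Fintype V] {G : SimpleGraph V}

@[simp]
lemma mem_cn {u v : V} : u ∈ cn G v ↔ u = v ∨ G.Adj v u := by
  simp [cn]

lemma self_mem_cn (v : V) : v ∈ cn G v := mem_cn.2 (Or.inl rfl)

lemma mem_cn_of_adj {u v : V} (h : G.Adj v u) : u ∈ cn G v := mem_cn.2 (Or.inr h)

lemma mem_cn_comm {u v : V} : u ∈ cn G v ↔ v ∈ cn G u := by
  simp only [mem_cn, eq_comm, G.adj_comm]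

lemma not_cn_subset_of_notMem {v : V} {D : Finset V} (h : v ∉ D) : ¬ cn G v ⊆ D :=
  fun hs => h (hs (self_mem_cn v))

lemma mem_cn_of_leaf {ℓ p x : V} (hℓ : ∀ w, G.Adj ℓ w ↔ w = p) :
    x ∈ cn G ℓ ↔ x = ℓ ∨ x = p := by
  simp [hℓ]

lemma cn_subset_cn_of_mem_cn_leaf {ℓ p y : V} (hℓ : ∀ w, G.Adj ℓ w ↔ w = p)
    (hy : y ∈ cn G ℓ) : cn G ℓ ⊆ cn G y := by
  intro z hz
  have hℓp : G.Adj ℓ p := (hℓ p).2 rfl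
  rw [mem_cn_of_leaf hℓ] at hy hz
  rcases hy with rfl | rfl <;> rcases hz with rfl | rfl <;> simp [hℓp, hℓp.symm]

lemma eq_of_mem_cn_of_mem_cn (hG : G.IsAcyclic) {h a b e : V} (hab : a ≠ b) (ha : G.Adj h a)
    (hb : G.Adj h b) (hae : a ∈ cn G e) (hbe : b ∈ cn G e) : e = h := by
  have htri : G.CliqueFree 3 := hG.cliqueFree le_rfl
  rcases mem_cn.1 hae with rfl | hea
  · exact absurd ((mem_cn.1 hbe).resolve_left hab.symm) (htri.not_adj_of_adj_of_adj ha hb)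
  rcases mem_cn.1 hbe with rfl | heb
  · exact absurd hea (htri.not_adj_of_adj_of_adj hb ha)
  · exact hG.eq_of_adj_of_adj hab hea.symm heb ha.symm hb

/-- Spelled with the decidability instance of the move set inside `auxVal`, so that `auxVal`
unfolds to it. -/
noncomputable def legalMoves (G : SimpleGraph V) (D : Finset V) : Finset V :=
  @Finset.filter V (fun v : V => ¬ cn G v ⊆ D) (fun _ => Classical.propDecidable _) univ

lemma mem_legalMoves {v : V} {D : Finset V} : v ∈ legalMoves G D ↔ ¬ cn G v ⊆ D := by
  simp [legalMoves]

lemma legalMoves_nonempty {D : Finset V} (hD : D ≠ univ) : (legalMoves G D).Nonempty := by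
  obtain ⟨v, hv⟩ : ∃ v, v ∉ D := by simpa [eq_univ_iff_forall] using hD
  exact ⟨v, mem_legalMoves.2 (not_cn_subset_of_notMem hv)⟩

variable [DecidableEq V] {n : ℕ} {D : Finset V}

lemma auxVal_univ (n : ℕ) (who : Bool) : auxVal G n who univ = 0 := by
  cases n <;> simp [auxVal]

lemma auxVal_succ_true (hD : D ≠ univ) :
    auxVal G (n + 1) true D =
      ((legalMoves G D).image (fun v => 1 + auxVal G n false (D ∪ cn G v))).min'
        ((legalMoves_nonempty hD).image _) := by
  rw [auxVal, if_neg hD, if_pos rfl]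
  change WithTop.untopD 0 ((legalMoves G D).image _).min = _
  rw [← coe_min' ((legalMoves_nonempty hD).image _), WithTop.untopD_coe]

lemma auxVal_succ_false (hD : D ≠ univ) :
    auxVal G (n + 1) false D =
      (legalMoves G D).sup (fun v => 1 + auxVal G n true (D ∪ cn G v)) := by
  rw [auxVal, if_neg hD]
  rfl

lemma auxVal_succ_true_le {d : V} (hd : ¬ cn G d ⊆ D) :
    auxVal G (n + 1) true D ≤ 1 + auxVal G n false (D ∪ cn G d) := by
  have hD : D ≠ univ := by rintro rfl; exact hd (subset_univ _)
  rw [auxVal_succ_true hD]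
  exact min'_le _ _ (mem_image_of_mem _ (mem_legalMoves.2 hd))

lemma exists_auxVal_succ_true_eq (hD : D ≠ univ) :
    ∃ d, ¬ cn G d ⊆ D ∧ auxVal G (n + 1) true D = 1 + auxVal G n false (D ∪ cn G d) := by
  obtain ⟨d, hd, hval⟩ := mem_image.1 <|
    ((legalMoves G D).image fun v => 1 + auxVal G n false (D ∪ cn G v)).min'_mem
      ((legalMoves_nonempty hD).image _)
  exact ⟨d, mem_legalMoves.1 hd, by rw [auxVal_succ_true hD, hval]⟩

lemma le_auxVal_succ_false {s : V} (hs : ¬ cn G s ⊆ D) :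
    1 + auxVal G n true (D ∪ cn G s) ≤ auxVal G (n + 1) false D := by
  have hD : D ≠ univ := by rintro rfl; exact hs (subset_univ _)
  rw [auxVal_succ_false hD]
  exact le_sup (f := fun v : V => 1 + auxVal G n true (D ∪ cn G v)) (mem_legalMoves.2 hs)

lemma exists_auxVal_succ_false_eq (hD : D ≠ univ) :
    ∃ s, ¬ cn G s ⊆ D ∧ auxVal G (n + 1) false D = 1 + auxVal G n true (D ∪ cn G s) := by
  rw [auxVal_succ_false hD]
  obtain ⟨s, hs, hval⟩ := exists_mem_eq_sup _ (legalMoves_nonempty hD)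
    (fun v : V => 1 + auxVal G n true (D ∪ cn G v))
  exact ⟨s, mem_legalMoves.1 hs, hval⟩

lemma auxVal_succ_pos (who : Bool) (hD : D ≠ univ) : 0 < auxVal G (n + 1) who D := by
  cases who
  · obtain ⟨s, -, hval⟩ := exists_auxVal_succ_false_eq (G := G) (n := n) hD
    omega
  · obtain ⟨d, -, hval⟩ := exists_auxVal_succ_true_eq (G := G) (n := n) hD
    omega

lemma ne_univ_of_auxVal_pos {who : Bool} (h : 0 < auxVal G n who D) : D ≠ univ := by
  rintro rfl
  rw [auxVal_univ] at h
  exact h.false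

lemma auxVal_le_fuel (n : ℕ) (who : Bool) (D : Finset V) : auxVal G n who D ≤ n := by
  induction n generalizing who D with
  | zero => simp [auxVal]
  | succ n ih =>
    by_cases hD : D = univ
    · simp [hD, auxVal_univ]
    cases who
    · obtain ⟨s, -, hval⟩ := exists_auxVal_succ_false_eq (G := G) (n := n) hD
      have := ih true (D ∪ cn G s)
      omega
    · obtain ⟨d, -, hval⟩ := exists_auxVal_succ_true_eq (G := G) (n := n) hD
      have := ih false (D ∪ cn G d)
      omega

lemma gammaG_le_card : gammaG G ≤ Fintype.card V := auxVal_le_fuel _ _ _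

/-- What `4 ≤ γ_g` says about the first three moves. -/
def DominatorStartNeedsFour (G : SimpleGraph V) : Prop :=
  ∀ d, ∃ s, ¬ cn G s ⊆ cn G d ∧ ∀ x, cn G d ∪ cn G s ∪ cn G x ≠ univ

/-- What `γ_g' ≤ 3` says about the first three moves. -/
def StallerStartWithinThree (G : SimpleGraph V) : Prop :=
  ∀ s, cn G s ≠ univ → ∃ d, ∀ t, ¬ cn G t ⊆ cn G s ∪ cn G d → cn G s ∪ cn G d ∪ cn G t = univ

lemma dominatorStartNeedsFour_of_four_le_gammaG (h : 4 ≤ gammaG G) :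
    DominatorStartNeedsFour G := by
  obtain ⟨n, hn⟩ := Nat.exists_eq_add_of_le' (h.trans gammaG_le_card)
  rw [gammaG, gVal, hn] at h
  intro d
  have hd : 3 ≤ auxVal G (n + 3) false (cn G d) := by
    have := h.trans (auxVal_succ_true_le (not_cn_subset_of_notMem (notMem_empty d)))
    rw [empty_union] at this
    omega
  obtain ⟨s, hs, hval⟩ := exists_auxVal_succ_false_eq (n := n + 2)
    (ne_univ_of_auxVal_pos (by omega : 0 < auxVal G (n + 3) false (cn G d)))
  have htwo : 2 ≤ auxVal G (n + 2) true (cn G d ∪ cn G s) := by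
    change auxVal G (n + 3) false (cn G d) = _ at hval
    omega
  refine ⟨s, hs, fun x hx => ?_⟩
  by_cases hxD : cn G x ⊆ cn G d ∪ cn G s
  · rw [union_eq_left.2 hxD] at hx
    exact ne_univ_of_auxVal_pos (by omega : 0 < auxVal G (n + 2) true _) hx
  · have : auxVal G (n + 2) true (cn G d ∪ cn G s) ≤ 1 + _ := auxVal_succ_true_le hxD
    rw [hx, auxVal_univ] at this
    omega

lemma stallerStartWithinThree_of_gammaG'_le_three (hcard : 4 ≤ Fintype.card V)
    (h : gammaG' G ≤ 3) : StallerStartWithinThree G := by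
  obtain ⟨n, hn⟩ := Nat.exists_eq_add_of_le' hcard
  rw [gammaG', gVal', hn] at h
  intro s hs
  have hs3 : 1 + auxVal G (n + 3) true (cn G s) ≤ 3 := by
    simpa using (le_auxVal_succ_false (not_cn_subset_of_notMem (notMem_empty s))).trans h
  obtain ⟨d, -, hval⟩ := exists_auxVal_succ_true_eq (n := n + 2) hs
  change auxVal G (n + 3) true (cn G s) = _ at hval
  refine ⟨d, fun t ht => ?_⟩
  have := le_auxVal_succ_false (n := n + 1) ht
  change _ ≤ auxVal G (n + 2) false _ at this
  by_contra hne
  have := auxVal_succ_pos (G := G) (n := n) true hne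
  omega

lemma DominatorStartNeedsFour.union_ne_univ (hA : DominatorStartNeedsFour G) (d x : V) :
    cn G d ∪ cn G x ≠ univ := by
  obtain ⟨s, -, hs⟩ := hA d
  intro h
  apply hs x
  rw [union_right_comm, h]
  simp

lemma eq_of_notMem_of_forall_legal_covers (hconn : G.Preconnected) (htri : G.CliqueFree 3)
    {D : Finset V} (hD : D.Nonempty) (hcov : ∀ t, ¬ cn G t ⊆ D → D ∪ cn G t = univ)
    {u v : V} (hu : u ∉ D) (hv : v ∉ D) : u = v := by
  have hmem : ∀ t y, ¬ cn G t ⊆ D → y ∉ D → y ∈ cn G t := fun t y ht hy => by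
    have := hcov t ht ▸ mem_univ y
    simpa [hy] using this
  by_contra huv
  -- a vertex `w ∈ D` next to a vertex outside `D` is a legal move, so `w, u, v` form a triangle
  obtain ⟨x, hx⟩ := hD
  obtain ⟨⟨⟨z, w⟩, hzw⟩, -, hz, hw⟩ :=
    (hconn u x).some.exists_boundary_dart {y | y ∉ D} hu (by simpa using hx)
  simp only [Set.mem_ofPred_eq, not_not] at hz hw
  have hw_legal : ¬ cn G w ⊆ D := fun h => hz (h (mem_cn_of_adj hzw.symm))
  have hwu : G.Adj w u :=
    (mem_cn.1 (hmem w u hw_legal hu)).resolve_left (by rintro rfl; exact hu hw)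
  have hwv : G.Adj w v :=
    (mem_cn.1 (hmem w v hw_legal hv)).resolve_left (by rintro rfl; exact hv hw)
  have hvu : G.Adj v u :=
    (mem_cn.1 (hmem v u (not_cn_subset_of_notMem hv) hu)).resolve_left huv
  exact htri.not_adj_of_adj_of_adj hwv hwu hvu

lemma exists_partner (hconn : G.Preconnected) (htri : G.CliqueFree 3)
    (hA : DominatorStartNeedsFour G) (hB : StallerStartWithinThree G) (s : V) :
    ∃ e w, ∀ v, v ∉ cn G s ∪ cn G e ↔ v = w := by
  obtain ⟨e, he⟩ := hB s (by simpa using hA.union_ne_univ s s)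
  obtain ⟨w, hw⟩ : ∃ w, w ∉ cn G s ∪ cn G e := by
    simpa [eq_univ_iff_forall] using hA.union_ne_univ s e
  refine ⟨e, w, fun v => ⟨fun hv => ?_, fun hvw => hvw ▸ hw⟩⟩
  exact eq_of_notMem_of_forall_legal_covers hconn htri ⟨s, by simp⟩ he hv hw

lemma DominatorStartNeedsFour.nontrivial [Nonempty V] (hA : DominatorStartNeedsFour G) :
    Nontrivial V := by
  obtain ⟨v⟩ := ‹Nonempty V›
  obtain ⟨w, hw⟩ : ∃ w, w ∉ cn G v := by simpa [eq_univ_iff_forall] using hA.union_ne_univ v v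
  exact ⟨v, w, fun hvw => hw (hvw ▸ self_mem_cn v)⟩

/-- Staller's reply to the opening `h` can only be a common neighbour of `h` and `p`. -/
lemma exists_common_adj_of_leaf_partner (hA : DominatorStartNeedsFour G) {ℓ p h u : V}
    (hℓ : ∀ w, G.Adj ℓ w ↔ w = p) (hcov : ∀ v ∉ cn G ℓ ∪ cn G h, v = u) :
    u ∉ cn G p ∧ ℓ ∉ cn G h ∧ ∃ b, G.Adj h b ∧ G.Adj b p ∧ u ∉ cn G b := by
  obtain ⟨b, hb, hM⟩ := hA h
  have hmiss : ∀ x, ∃ m, m ∉ cn G h ∧ m ∉ cn G b ∧ m ∉ cn G x := fun x => by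
    simpa only [ne_eq, eq_univ_iff_forall, not_forall, mem_union, not_or, and_assoc] using hM x
  have hout : ∀ m ∉ cn G h, m ∈ cn G ℓ ∨ m = u := fun m hm =>
    or_iff_not_imp_left.2 fun hmℓ => hcov m (by simp [hmℓ, hm])
  have hpℓ : p ∈ cn G ℓ := mem_cn_of_adj ((hℓ p).2 rfl)
  obtain ⟨m, hmh, hmb, hmp⟩ := hmiss p
  obtain rfl : m = u :=
    (hout m hmh).resolve_left fun hmℓ => hmp (cn_subset_cn_of_mem_cn_leaf hℓ hpℓ hmℓ)
  obtain ⟨m', hm'h, hm'b, hm'u⟩ := hmiss m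
  have hm'ℓ : m' ∈ cn G ℓ :=
    (hout m' hm'h).resolve_right (by rintro rfl; exact hm'u (self_mem_cn _))
  have hhℓ : h ∉ cn G ℓ := fun hhℓ => hm'h (cn_subset_cn_of_mem_cn_leaf hℓ hhℓ hm'ℓ)
  have hbℓ : b ∉ cn G ℓ := fun hbℓ => hm'b (cn_subset_cn_of_mem_cn_leaf hℓ hbℓ hm'ℓ)
  obtain ⟨y, hyb, hyh⟩ := not_subset.1 hb
  obtain rfl : y = p := by
    rcases hout y hyh with hyℓ | rfl
    · exact ((mem_cn_of_leaf hℓ).1 hyℓ).resolve_left (by rintro rfl; exact hbℓ (mem_cn_comm.1 hyb))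
    · exact absurd hyb hmb
  have hbh : b ∈ cn G h := by
    by_contra hbh
    rcases hout b hbh with hbℓ' | rfl
    · exact hbℓ hbℓ'
    · exact hmb (self_mem_cn _)
  refine ⟨hmp, fun hℓh => hhℓ (mem_cn_comm.1 hℓh), b, ?_, ?_, hmb⟩
  · exact (mem_cn.1 hbh).resolve_left (by rintro rfl; exact hyh hyb)
  · exact (mem_cn.1 hyb).resolve_left (by rintro rfl; exact hbℓ hpℓ)

/-- The path `u – a – h – b – p – ℓ` hanging off a leaf `ℓ` and its partner `h`. -/
structure LeafConfig (G : SimpleGraph V) (ℓ p h u a b : V) : Prop where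
  leaf : ∀ w, G.Adj ℓ w ↔ w = p
  cover : ∀ v ∉ cn G ℓ ∪ cn G h, v = u
  u_notMem_ℓ : u ∉ cn G ℓ
  u_notMem_h : u ∉ cn G h
  u_notMem_p : u ∉ cn G p
  u_notMem_b : u ∉ cn G b
  ℓ_notMem_h : ℓ ∉ cn G h
  adj_ua : G.Adj u a
  adj_ha : G.Adj h a
  adj_hb : G.Adj h b
  adj_bp : G.Adj b p

lemma exists_adj_adj_of_leaf_partner [Nontrivial V] (hconn : G.Preconnected) {ℓ p h u : V}
    (hℓ : ∀ w, G.Adj ℓ w ↔ w = p) (hcov : ∀ v ∉ cn G ℓ ∪ cn G h, v = u)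
    (huℓ : u ∉ cn G ℓ) (huh : u ∉ cn G h) (hup : u ∉ cn G p) :
    ∃ a, G.Adj u a ∧ G.Adj h a := by
  obtain ⟨a, hua⟩ := hconn.exists_adj_of_nontrivial u
  have hua' : u ∈ cn G a := mem_cn_of_adj hua.symm
  have haℓ : a ∉ cn G ℓ := fun haℓ => by
    rcases (mem_cn_of_leaf hℓ).1 haℓ with rfl | rfl
    · exact huℓ hua'
    · exact hup hua'
  have hah : a ∈ cn G h := by
    by_contra hah
    exact hua.ne (hcov a (by simp [haℓ, hah])).symm
  exact ⟨a, hua, (mem_cn.1 hah).resolve_left (fun hah' => huh (hah' ▸ hua'))⟩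

namespace LeafConfig

variable {ℓ p h u a b : V}

/-- The vertex `c` is taken outside `N[a] ∪ N[p]`; it is a neighbour of `h`. -/
lemma exists_far_vertex (hC : LeafConfig G ℓ p h u a b) (hG : G.IsAcyclic)
    (hA : DominatorStartNeedsFour G) :
    ∃ c, u ∉ cn G c ∧ ℓ ∉ cn G c ∧ a ∉ cn G c ∧ b ∉ cn G c := by
  obtain ⟨c, hc⟩ : ∃ c, c ∉ cn G a ∪ cn G p := by
    simpa [eq_univ_iff_forall] using hA.union_ne_univ a p
  simp only [mem_union, not_or] at hc
  obtain ⟨hca, hcp⟩ := hc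
  have hua' : u ∈ cn G a := mem_cn_of_adj hC.adj_ua.symm
  have hpℓ : p ∈ cn G ℓ := mem_cn_of_adj ((hC.leaf p).2 rfl)
  have hcℓ : ℓ ∉ cn G c := fun hℓc =>
    hcp (cn_subset_cn_of_mem_cn_leaf hC.leaf hpℓ (mem_cn_comm.1 hℓc))
  have hhc : G.Adj h c := by
    have hch : c ∈ cn G h := by
      by_contra hch
      obtain rfl := hC.cover c (by simp [hch, mem_cn_comm.1.mt hcℓ])
      exact hca hua'
    exact (mem_cn.1 hch).resolve_left (by rintro rfl; exact hca (mem_cn_of_adj hC.adj_ha.symm))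
  refine ⟨c, fun huc => ?_, hcℓ, mem_cn_comm.1.mt hca, fun hbc => ?_⟩
  · rcases mem_cn.1 huc with rfl | hcu
    · exact hca hua'
    · have := hG.eq_of_adj_of_adj (by rintro rfl; exact hC.u_notMem_h (self_mem_cn _))
        hC.adj_ua hC.adj_ha.symm hcu.symm hhc.symm
      exact hca (this ▸ self_mem_cn a)
  · rcases mem_cn.1 hbc with rfl | hcb
    · exact hcp (mem_cn_of_adj hC.adj_bp.symm)
    · exact (hG.cliqueFree le_rfl).not_adj_of_adj_of_adj hhc hC.adj_hb hcb

/-- `N[e]` would have to contain three of `u, ℓ, a, b`; but only `N[h]` contains both `a` and `b`,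
and no closed neighbourhood contains both `u` and `ℓ`. -/
lemma false_of_partner (hC : LeafConfig G ℓ p h u a b) (hG : G.IsAcyclic) {c e x : V}
    (hu : u ∉ cn G c) (hℓ : ℓ ∉ cn G c) (ha : a ∉ cn G c) (hb : b ∉ cn G c)
    (hx : ∀ v ∉ cn G c ∪ cn G e, v = x) : False := by
  have hin : ∀ y ∉ cn G c, y ≠ x → y ∈ cn G e := fun y hy hyx => by
    by_contra hye
    exact hyx (hx y (by simp [hy, hye]))
  have huℓ : u ≠ ℓ := by rintro rfl; exact hC.u_notMem_ℓ (self_mem_cn _)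
  by_cases hxuℓ : x = u ∨ x = ℓ
  · have hax : a ≠ x := by
      rcases hxuℓ with rfl | rfl
      · exact hC.adj_ua.ne.symm
      · rintro rfl; exact hC.ℓ_notMem_h (mem_cn_of_adj hC.adj_ha)
    have hbx : b ≠ x := by
      rcases hxuℓ with rfl | rfl
      · rintro rfl; exact hC.u_notMem_b (self_mem_cn _)
      · rintro rfl; exact hC.ℓ_notMem_h (mem_cn_of_adj hC.adj_hb)
    have hab : a ≠ b := by rintro rfl; exact hC.u_notMem_b (mem_cn_of_adj hC.adj_ua.symm)
    obtain rfl := eq_of_mem_cn_of_mem_cn hG hab hC.adj_ha hC.adj_hb (hin a ha hax) (hin b hb hbx)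
    rcases hxuℓ with rfl | rfl
    · exact hC.ℓ_notMem_h (hin ℓ hℓ huℓ.symm)
    · exact hC.u_notMem_h (hin u hu huℓ)
  · obtain ⟨hxu, hxℓ⟩ := not_or.1 hxuℓ
    have hue := hin u hu (Ne.symm hxu)
    rcases (mem_cn_of_leaf hC.leaf).1 (mem_cn_comm.1 (hin ℓ hℓ (Ne.symm hxℓ))) with rfl | rfl
    · exact hC.u_notMem_ℓ hue
    · exact hC.u_notMem_p hue

end LeafConfig

theorem false_of_isTree (hT : G.IsTree) (hA : DominatorStartNeedsFour G)
    (hB : StallerStartWithinThree G) : False := by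
  classical
  have hconn := hT.connected.preconnected
  have htri : G.CliqueFree 3 := hT.isAcyclic.cliqueFree le_rfl
  have := hT.connected.nonempty
  have := hA.nontrivial
  obtain ⟨ℓ, hdeg⟩ := hT.exists_vert_degree_one_of_nontrivial
  obtain ⟨p, hℓp, hp⟩ := SimpleGraph.degree_eq_one_iff_existsUnique_adj.1 hdeg
  have hℓ : ∀ w, G.Adj ℓ w ↔ w = p := fun w => ⟨hp w, fun hw => hw ▸ hℓp⟩
  obtain ⟨h, u, hu⟩ := exists_partner hconn htri hA hB ℓ
  have hcov : ∀ v ∉ cn G ℓ ∪ cn G h, v = u := fun v => (hu v).1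
  obtain ⟨huℓ, huh⟩ := not_or.1 (mem_union.not.1 ((hu u).2 rfl))
  obtain ⟨hup, hℓh, b, hhb, hbp, hub⟩ := exists_common_adj_of_leaf_partner hA hℓ hcov
  obtain ⟨a, hua, hha⟩ := exists_adj_adj_of_leaf_partner hconn hℓ hcov huℓ huh hup
  have hC : LeafConfig G ℓ p h u a b := ⟨hℓ, hcov, huℓ, huh, hup, hub, hℓh, hua, hha, hhb, hbp⟩
  obtain ⟨c, hcu, hcℓ, hca, hcb⟩ := hC.exists_far_vertex hT.isAcyclic hA
  obtain ⟨e, x, hx⟩ := exists_partner hconn htri hA hB c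
  exact hC.false_of_partner hT.isAcyclic hcu hcℓ hca hcb fun v => (hx v).1

end DomGame

/-- no tree realizes the pair (4, 3). -/
theorem stmt9 {V : Type*} [Fintype V] [DecidableEq V] (T : SimpleGraph V)
    (hT : T.IsTree) :
    ¬ (DomGame.gammaG T = 4 ∧ DomGame.gammaG' T = 3) := by
  rintro ⟨h4, h3⟩
  exact DomGame.false_of_isTree hT (DomGame.dominatorStartNeedsFour_of_four_le_gammaG h4.ge)
    (DomGame.stallerStartWithinThree_of_gammaG'_le_three (h4.ge.trans DomGame.gammaG_le_card) h3.le)
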